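/- Let π be the presented group with generators u, v, x, y and relators [u,x], [u,y], [v,x], [v,y], [u,v]x⁻², x y x⁻¹ y (so u and v commute with x and y, [u,v] = x², and x y x⁻¹ = y⁻¹), and let N be the normal closure of {x, y} in π. Then the quotient homomorphism π → π/N admits no group-homomorphism section. -/

import Mathlib

open scoped commutatorElement

/-! The map `u ↦ (1,0,0)`, `v ↦ (0,2,0)`, `x ↦ (0,0,1)`, `y ↦ 1` into the integral Heisenberg
group kills the relators and sends the fibre `N` into the centre. Lifts of `ū, v̄` therefore
have the same image commutator as `u, v`, namely `(0,0,2) ≠ 1`. A section `s` would provide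
the commuting lifts `s ū, s v̄`, since `[ū, v̄] = x̄² = 1` in `π/N`. -/

/-- Generators: `u = 0`, `v = 1`, `x = 2`, `y = 3`.  Relators: `[u,x]`, `[u,y]`,
`[v,x]`, `[v,y]`, `[u,v]x⁻²`, `xyx⁻¹y`.  This presents the fundamental group of a
`Nil³ × E¹`-manifold fibring over the torus with fibre the Klein bottle and trivial
monodromy. -/
abbrev nilKleinBundleRels : Set (FreeGroup (Fin 4)) :=
  { ⁅(FreeGroup.of 0 : FreeGroup (Fin 4)), FreeGroup.of 2⁆,
    ⁅(FreeGroup.of 0 : FreeGroup (Fin 4)), FreeGroup.of 3⁆,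
    ⁅(FreeGroup.of 1 : FreeGroup (Fin 4)), FreeGroup.of 2⁆,
    ⁅(FreeGroup.of 1 : FreeGroup (Fin 4)), FreeGroup.of 3⁆,
    ⁅(FreeGroup.of 0 : FreeGroup (Fin 4)), FreeGroup.of 1⁆ * ((FreeGroup.of 2) ^ 2)⁻¹,
    (FreeGroup.of 2 : FreeGroup (Fin 4)) * FreeGroup.of 3 * (FreeGroup.of 2)⁻¹ *
      FreeGroup.of 3 }

/-- The fibre subgroup: the normal closure of `{x, y}` (a Klein bottle group). -/
abbrev nilKleinBundleFibre : Subgroup (PresentedGroup nilKleinBundleRels) :=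
  Subgroup.normalClosure {PresentedGroup.of 2, PresentedGroup.of 3}

section CommutatorModCentre

variable {G H : Type*} [Group G] [Group H]

theorem commutatorElement_mul_mem_center {a b z w : H} (hz : z ∈ Subgroup.center H)
    (hw : w ∈ Subgroup.center H) : ⁅a * z, b * w⁆ = ⁅a, b⁆ := by
  rw [Subgroup.mem_center_iff] at hz hw
  calc ⁅a * z, b * w⁆ = a * (z * (b * w) * z⁻¹) * a⁻¹ * w⁻¹ * b⁻¹ := by group
    _ = a * b * (w * a⁻¹ * w⁻¹) * b⁻¹ := by rw [← hz, mul_inv_cancel_right]; group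
    _ = ⁅a, b⁆ := by rw [← hw, mul_inv_cancel_right, commutatorElement_def]

theorem map_commutatorElement_eq_of_mk_eq (N : Subgroup G) [N.Normal] (f : G →* H)
    (hf : N ≤ (Subgroup.center H).comap f) {a b a' b' : G}
    (ha : (a : G ⧸ N) = a') (hb : (b : G ⧸ N) = b') : f ⁅a, b⁆ = f ⁅a', b'⁆ := by
  obtain ⟨n, hn, rfl⟩ : ∃ n ∈ N, a' = a * n :=
    ⟨a⁻¹ * a', QuotientGroup.eq.mp ha, (mul_inv_cancel_left a a').symm⟩
  obtain ⟨m, hm, rfl⟩ : ∃ m ∈ N, b' = b * m :=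
    ⟨b⁻¹ * b', QuotientGroup.eq.mp hb, (mul_inv_cancel_left b b').symm⟩
  rw [map_commutatorElement, map_commutatorElement, map_mul, map_mul,
    commutatorElement_mul_mem_center (hf hn) (hf hm)]

theorem QuotientGroup.not_exists_section_of_map_commutatorElement_ne_one (N : Subgroup G)
    [N.Normal] (f : G →* H) (hf : N ≤ (Subgroup.center H).comap f) {g h : G}
    (hgh : ⁅g, h⁆ ∈ N) (hne : f ⁅g, h⁆ ≠ 1) :
    ¬ ∃ s : G ⧸ N →* G, (QuotientGroup.mk' N).comp s = MonoidHom.id (G ⧸ N) := by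
  rintro ⟨s, hs⟩
  have hlift (q : G ⧸ N) : ((s q : G) : G ⧸ N) = q := DFunLike.congr_fun hs q
  have hcomm : ⁅s g, s h⁆ = 1 := by
    have hmk : ⁅(g : G ⧸ N), (h : G ⧸ N)⁆ = 1 :=
      (map_commutatorElement (QuotientGroup.mk' N) g h).symm.trans
        ((QuotientGroup.eq_one_iff _).mpr hgh)
    rw [← map_commutatorElement, hmk, map_one]
  apply hne
  rw [map_commutatorElement_eq_of_mk_eq N f hf (hlift g).symm (hlift h).symm, hcomm, map_one]

end CommutatorModCentre

/-- `⟨a, b, c⟩` stands for the unitriangular matrix `[[1, a, c], [0, 1, b], [0, 0, 1]]`. -/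
@[ext] structure HeisenbergGroup (R : Type*) where
  a : R
  b : R
  c : R

namespace HeisenbergGroup

variable {R : Type*} [CommRing R]

instance : Mul (HeisenbergGroup R) := ⟨fun g h => ⟨g.a + h.a, g.b + h.b, g.c + h.c + g.a * h.b⟩⟩
instance : One (HeisenbergGroup R) := ⟨⟨0, 0, 0⟩⟩
instance : Inv (HeisenbergGroup R) := ⟨fun g => ⟨-g.a, -g.b, -g.c + g.a * g.b⟩⟩

@[simp] theorem mul_def (g h : HeisenbergGroup R) :
    g * h = ⟨g.a + h.a, g.b + h.b, g.c + h.c + g.a * h.b⟩ := rfl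
@[simp] theorem one_def : (1 : HeisenbergGroup R) = ⟨0, 0, 0⟩ := rfl
@[simp] theorem inv_def (g : HeisenbergGroup R) : g⁻¹ = ⟨-g.a, -g.b, -g.c + g.a * g.b⟩ := rfl

instance : Group (HeisenbergGroup R) where
  mul_assoc g h k := by ext <;> simp only [mul_def] <;> ring
  one_mul g := by ext <;> simp
  mul_one g := by ext <;> simp
  inv_mul_cancel g := by ext <;> simp

theorem commutatorElement_eq (g h : HeisenbergGroup R) :
    ⁅g, h⁆ = ⟨0, 0, g.a * h.b - h.a * g.b⟩ := by
  ext <;> simp only [commutatorElement_def, mul_def, inv_def] <;> ring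

theorem mk_zero_zero_mem_center (c : R) : (⟨0, 0, c⟩ : HeisenbergGroup R) ∈ Subgroup.center _ :=
  Subgroup.mem_center_iff.mpr fun g => by ext <;> simp [add_comm]

end HeisenbergGroup

def nilKleinBundleGensToHeisenberg : Fin 4 → HeisenbergGroup ℤ :=
  ![⟨1, 0, 0⟩, ⟨0, 2, 0⟩, ⟨0, 0, 1⟩, 1]

def nilKleinBundleToHeisenberg : PresentedGroup nilKleinBundleRels →* HeisenbergGroup ℤ :=
  PresentedGroup.toGroup (f := nilKleinBundleGensToHeisenberg) <| by
    simp only [nilKleinBundleRels, Set.mem_insert_iff, Set.mem_singleton_iff]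
    rintro r (rfl | rfl | rfl | rfl | rfl | rfl) <;>
      simp [nilKleinBundleGensToHeisenberg, HeisenbergGroup.commutatorElement_eq, sq]

theorem nilKleinBundleToHeisenberg_of (i : Fin 4) :
    nilKleinBundleToHeisenberg (PresentedGroup.of i) = nilKleinBundleGensToHeisenberg i :=
  PresentedGroup.toGroup.of _

theorem nilKleinBundleFibre_le_comap_center :
    nilKleinBundleFibre ≤ (Subgroup.center _).comap nilKleinBundleToHeisenberg := by
  refine Subgroup.normalClosure_le_normal ?_
  rintro g (rfl | rfl) <;>
    simpa [nilKleinBundleToHeisenberg_of, nilKleinBundleGensToHeisenberg] using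
      HeisenbergGroup.mk_zero_zero_mem_center _

theorem nilKleinBundle_commutatorElement_eq :
    ⁅(PresentedGroup.of 0 : PresentedGroup nilKleinBundleRels), PresentedGroup.of 1⁆ =
      (PresentedGroup.of 2 : PresentedGroup nilKleinBundleRels) ^ 2 := by
  have h := PresentedGroup.one_of_mem (rels := nilKleinBundleRels)
    (x := ⁅(FreeGroup.of 0 : FreeGroup (Fin 4)), FreeGroup.of 1⁆ * (FreeGroup.of 2 ^ 2)⁻¹)
    (by simp)
  rwa [map_mul, map_inv, map_pow, map_commutatorElement, mul_inv_eq_one] at h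

/-- The quotient map `π → π/N` (the Klein bottle bundle over the torus with trivial
monodromy and group the above `Nil³ × E¹`-group) admits no group-homomorphism
section. -/
theorem nilKleinBundle_has_no_section :
    ¬ ∃ s : (PresentedGroup nilKleinBundleRels ⧸ nilKleinBundleFibre) →*
        PresentedGroup nilKleinBundleRels,
      (QuotientGroup.mk' nilKleinBundleFibre).comp s =
        MonoidHom.id (PresentedGroup nilKleinBundleRels ⧸ nilKleinBundleFibre) := by
  have hmem : ⁅(PresentedGroup.of 0 : PresentedGroup nilKleinBundleRels), PresentedGroup.of 1⁆ ∈
      nilKleinBundleFibre := by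
    rw [nilKleinBundle_commutatorElement_eq]
    exact pow_mem (Subgroup.subset_normalClosure (by simp)) 2
  refine QuotientGroup.not_exists_section_of_map_commutatorElement_ne_one _ _
    nilKleinBundleFibre_le_comap_center hmem ?_
  simp [HeisenbergGroup.commutatorElement_eq, nilKleinBundleToHeisenberg_of,
    nilKleinBundleGensToHeisenberg]
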